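/- In sl(3), the classical r-matrix r_{JE} = H^P ∧ E + A ∧ B + ξ H^⊥ ∧ A (with H^P, H^⊥, A, B, E as in the standard peripheric identification) satisfies the classical Yang–Baxter equation for every scalar ξ. -/

import Mathlib

set_option maxHeartbeats 1000000

/- STATEMENT 11: In sl(3), r_JE = H^P ∧ E + A ∧ B + ξ H^⊥ ∧ A satisfies the
classical Yang–Baxter equation in U(sl(3))^{⊗3} for every scalar ξ, where
H^P = (1/3)(2E₁₁−E₂₂−E₃₃), H^⊥ = (1/3)(E₁₁−2E₂₂+E₃₃), A = E₁₂, B = E₂₃, E = E₁₃. -/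

open TensorProduct Matrix

attribute [local instance 100] LieRing.ofAssociativeRing

noncomputable section

variable (K : Type) [Field K] [CharZero K] (L : Type) [LieRing L] [LieAlgebra K L]

/-- The triple tensor power of the universal enveloping algebra. -/
abbrev UEA3 := UniversalEnvelopingAlgebra K L ⊗[K]
    (UniversalEnvelopingAlgebra K L ⊗[K] UniversalEnvelopingAlgebra K L)

variable {L}

/-- `a ↦ ι a ⊗ 1 ⊗ 1`. -/
def emb1 (a : L) : UEA3 K L :=
  (UniversalEnvelopingAlgebra.ι K a) ⊗ₜ[K] ((1 : UniversalEnvelopingAlgebra K L) ⊗ₜ[K] 1)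

/-- `a ↦ 1 ⊗ ι a ⊗ 1`. -/
def emb2 (a : L) : UEA3 K L :=
  (1 : UniversalEnvelopingAlgebra K L) ⊗ₜ[K] ((UniversalEnvelopingAlgebra.ι K a) ⊗ₜ[K] 1)

/-- `a ↦ 1 ⊗ 1 ⊗ ι a`. -/
def emb3 (a : L) : UEA3 K L :=
  (1 : UniversalEnvelopingAlgebra K L) ⊗ₜ[K]
    ((1 : UniversalEnvelopingAlgebra K L) ⊗ₜ[K] (UniversalEnvelopingAlgebra.ι K a))

/-- `(a ∧ b)₁₂ = a ⊗ b ⊗ 1 − b ⊗ a ⊗ 1`. -/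
def w12 (a b : L) : UEA3 K L := emb1 K a * emb2 K b - emb1 K b * emb2 K a

/-- `(a ∧ b)₁₃ = a ⊗ 1 ⊗ b − b ⊗ 1 ⊗ a`. -/
def w13 (a b : L) : UEA3 K L := emb1 K a * emb3 K b - emb1 K b * emb3 K a

/-- `(a ∧ b)₂₃ = 1 ⊗ a ⊗ b − 1 ⊗ b ⊗ a`. -/
def w23 (a b : L) : UEA3 K L := emb2 K a * emb3 K b - emb2 K b * emb3 K a

def Esl3 (i j : Fin 3) : Matrix (Fin 3) (Fin 3) K := single i j 1

def HPsl3 : Matrix (Fin 3) (Fin 3) K :=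
  (3 : K)⁻¹ • ((2 : K) • Esl3 K 0 0 - Esl3 K 1 1 - Esl3 K 2 2)

def Hperpsl3 : Matrix (Fin 3) (Fin 3) K :=
  (3 : K)⁻¹ • (Esl3 K 0 0 - (2 : K) • Esl3 K 1 1 + Esl3 K 2 2)

/-- `(r_JE)ₚq` as a function of the wedge embedding. -/
def rJE (ξ : K)
    (w : Matrix (Fin 3) (Fin 3) K → Matrix (Fin 3) (Fin 3) K → UEA3 K (Matrix (Fin 3) (Fin 3) K)) :
    UEA3 K (Matrix (Fin 3) (Fin 3) K) :=
  w (HPsl3 K) (Esl3 K 0 2) + w (Esl3 K 0 1) (Esl3 K 1 2) + ξ • w (Hperpsl3 K) (Esl3 K 0 1)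

/-
Expanding `r_JE` bilinearly, each of `[r₁₂, r₁₃]`, `[r₁₂, r₂₃]`, `[r₁₃, r₂₃]` becomes a sum of pure
tensors `x ⊗ y ⊗ z` in which one factor is a bracket of two of `H^P, H^⊥, A, B, E`: elements
placed in different tensor slots commute, so e.g. `[a ⊗ b ⊗ 1, c ⊗ 1 ⊗ d] = [a, c] ⊗ b ⊗ d`.
`H^P` and `H^⊥` are diagonal, hence act on the root vectors `A, B, E` by differences of their
diagonal entries, and `[A, B] = E` is the only nonzero bracket among root vectors. With this
bracket table all the terms cancel, for every `ξ`.
-/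

section Embeddings

variable {F : Type} [Field F] {M : Type} [LieRing M] [LieAlgebra F M]

lemma emb2_mul_emb1 (a b : M) : emb2 F a * emb1 F b = emb1 F b * emb2 F a := by
  simp [emb1, emb2, Algebra.TensorProduct.tmul_mul_tmul]

lemma emb3_mul_emb1 (a b : M) : emb3 F a * emb1 F b = emb1 F b * emb3 F a := by
  simp [emb1, emb3, Algebra.TensorProduct.tmul_mul_tmul]

lemma emb3_mul_emb2 (a b : M) : emb3 F a * emb2 F b = emb2 F b * emb3 F a := by
  simp [emb2, emb3, Algebra.TensorProduct.tmul_mul_tmul]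

lemma emb2_mul_emb1_mul (a b : M) (x : UEA3 F M) :
    emb2 F a * (emb1 F b * x) = emb1 F b * (emb2 F a * x) := by
  rw [← mul_assoc, emb2_mul_emb1, mul_assoc]

lemma emb3_mul_emb1_mul (a b : M) (x : UEA3 F M) :
    emb3 F a * (emb1 F b * x) = emb1 F b * (emb3 F a * x) := by
  rw [← mul_assoc, emb3_mul_emb1, mul_assoc]

lemma emb3_mul_emb2_mul (a b : M) (x : UEA3 F M) :
    emb3 F a * (emb2 F b * x) = emb2 F b * (emb3 F a * x) := by
  rw [← mul_assoc, emb3_mul_emb2, mul_assoc]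

lemma emb1_lie (a b : M) : emb1 F ⁅a, b⁆ = ⁅emb1 F a, emb1 F b⁆ := by
  simp [emb1, Algebra.TensorProduct.tmul_mul_tmul, Ring.lie_def, sub_tmul]

lemma emb2_lie (a b : M) : emb2 F ⁅a, b⁆ = ⁅emb2 F a, emb2 F b⁆ := by
  simp [emb2, Algebra.TensorProduct.tmul_mul_tmul, Ring.lie_def, sub_tmul, tmul_sub]

lemma emb3_lie (a b : M) : emb3 F ⁅a, b⁆ = ⁅emb3 F a, emb3 F b⁆ := by
  simp [emb3, Algebra.TensorProduct.tmul_mul_tmul, Ring.lie_def, tmul_sub]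

variable (F) in
def tensor3 (x y z : M) : UEA3 F M := emb1 F x * emb2 F y * emb3 F z

lemma tensor3_zero_left (y z : M) : tensor3 F 0 y z = 0 := by simp [tensor3, emb1]
lemma tensor3_zero_mid (x z : M) : tensor3 F x 0 z = 0 := by simp [tensor3, emb2]
lemma tensor3_zero_right (x y : M) : tensor3 F x y 0 = 0 := by simp [tensor3, emb3]

lemma emb1_neg (a : M) : emb1 F (-a) = -emb1 F a := by simp [emb1, neg_tmul]
lemma emb2_neg (a : M) : emb2 F (-a) = -emb2 F a := by simp [emb2, neg_tmul, tmul_neg]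
lemma emb3_neg (a : M) : emb3 F (-a) = -emb3 F a := by simp [emb3, tmul_neg]

-- `neg_mul` and `mul_neg` match here only up to unfolding instances, so `rw` cannot use them.
lemma tensor3_neg_left (x y z : M) : tensor3 F (-x) y z = -tensor3 F x y z := by
  rw [tensor3, emb1_neg]
  exact (congrArg (· * emb3 F z) (neg_mul _ _)).trans (neg_mul _ _)
lemma tensor3_neg_mid (x y z : M) : tensor3 F x (-y) z = -tensor3 F x y z := by
  rw [tensor3, emb2_neg]
  exact (congrArg (· * emb3 F z) (mul_neg _ _)).trans (neg_mul _ _)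
lemma tensor3_neg_right (x y z : M) : tensor3 F x y (-z) = -tensor3 F x y z := by
  rw [tensor3, emb3_neg]
  exact mul_neg (emb1 F x * emb2 F y) (emb3 F z)

lemma lie_emb12_emb13 (a b c d : M) :
    ⁅emb1 F a * emb2 F b, emb1 F c * emb3 F d⁆ = tensor3 F ⁅a, c⁆ b d := by
  simp only [Ring.lie_def, tensor3, emb1_lie, sub_mul, mul_assoc, emb3_mul_emb2,
    emb2_mul_emb1_mul, emb3_mul_emb1_mul]

lemma lie_emb12_emb23 (a b c d : M) :
    ⁅emb1 F a * emb2 F b, emb2 F c * emb3 F d⁆ = tensor3 F a ⁅b, c⁆ d := by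
  simp only [Ring.lie_def, tensor3, emb2_lie, mul_sub, sub_mul, mul_assoc, emb3_mul_emb2,
    emb2_mul_emb1_mul, emb3_mul_emb1_mul]

lemma lie_emb13_emb23 (a b c d : M) :
    ⁅emb1 F a * emb3 F b, emb2 F c * emb3 F d⁆ = tensor3 F a c ⁅b, d⁆ := by
  simp only [Ring.lie_def, tensor3, emb3_lie, mul_sub, mul_assoc, emb2_mul_emb1_mul,
    emb3_mul_emb1_mul, emb3_mul_emb2_mul]

lemma lie_w12_w13 (a b c d : M) : ⁅w12 F a b, w13 F c d⁆ =
    tensor3 F ⁅a, c⁆ b d - tensor3 F ⁅a, d⁆ b c - tensor3 F ⁅b, c⁆ a d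
      + tensor3 F ⁅b, d⁆ a c := by
  simp only [w12, w13, sub_lie, lie_sub, lie_emb12_emb13]
  abel

lemma lie_w12_w23 (a b c d : M) : ⁅w12 F a b, w23 F c d⁆ =
    tensor3 F a ⁅b, c⁆ d - tensor3 F a ⁅b, d⁆ c - tensor3 F b ⁅a, c⁆ d
      + tensor3 F b ⁅a, d⁆ c := by
  simp only [w12, w23, sub_lie, lie_sub, lie_emb12_emb23]
  abel

lemma lie_w13_w23 (a b c d : M) : ⁅w13 F a b, w23 F c d⁆ =
    tensor3 F a c ⁅b, d⁆ - tensor3 F a d ⁅b, c⁆ - tensor3 F b c ⁅a, d⁆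
      + tensor3 F b d ⁅a, c⁆ := by
  simp only [w13, w23, sub_lie, lie_sub, lie_emb13_emb23]
  abel

-- `smul_lie` itself does not rewrite here: its scalar action is found through a different
-- instance path than the one on the tensor product.
lemma smul_lie_UEA3 (c : F) (x y : UEA3 F M) : ⁅c • x, y⁆ = c • ⁅x, y⁆ := smul_lie c x y

end Embeddings

section MatrixUnits

variable {R : Type*} [CommRing R] {n : Type*} [Fintype n] [DecidableEq n]

lemma Matrix.diagonal_lie_single (d : n → R) (i j : n) (c : R) :
    ⁅diagonal d, single i j c⁆ = (d i - d j) • single i j c := by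
  ext a b
  by_cases hi : i = a <;> by_cases hj : j = b <;>
    simp [Ring.lie_def, diagonal_mul, mul_diagonal, single, hi, hj]
  ring

lemma Matrix.single_lie_single_of_ne {i k : n} (hik : i ≠ k) (j : n) (a b : R) :
    ⁅single i j a, single j k b⁆ = single i k (a * b) := by
  rw [Ring.lie_def, single_mul_single_same, single_mul_single_of_ne _ _ _ _ hik.symm, sub_zero]

lemma Matrix.single_lie_single_eq_zero {i j k l : n} (hjk : j ≠ k) (hli : l ≠ i) (a b : R) :
    ⁅single i j a, single k l b⁆ = 0 := by
  rw [Ring.lie_def, single_mul_single_of_ne _ _ _ _ hjk, single_mul_single_of_ne _ _ _ _ hli,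
    sub_zero]

end MatrixUnits

namespace sl3

variable {F : Type} [Field F]

lemma HP_eq_diagonal : HPsl3 F = diagonal ((3 : F)⁻¹ • ![2, -1, -1]) := by
  ext i j
  fin_cases i <;> fin_cases j <;> simp [HPsl3, Esl3, single, diagonal]

lemma Hperp_eq_diagonal : Hperpsl3 F = diagonal ((3 : F)⁻¹ • ![1, -2, 1]) := by
  ext i j
  fin_cases i <;> fin_cases j <;> simp [Hperpsl3, Esl3, single, diagonal]

lemma lie_HP_E [NeZero (3 : F)] : ⁅HPsl3 F, Esl3 F 0 2⁆ = Esl3 F 0 2 := by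
  rw [HP_eq_diagonal, Esl3, diagonal_lie_single]
  convert one_smul F _
  simp [field]
  norm_num

lemma lie_HP_A [NeZero (3 : F)] : ⁅HPsl3 F, Esl3 F 0 1⁆ = Esl3 F 0 1 := by
  rw [HP_eq_diagonal, Esl3, diagonal_lie_single]
  convert one_smul F _
  simp [field]
  norm_num

lemma lie_HP_B : ⁅HPsl3 F, Esl3 F 1 2⁆ = 0 := by
  rw [HP_eq_diagonal, Esl3, diagonal_lie_single]
  simp

lemma lie_Hperp_A [NeZero (3 : F)] : ⁅Hperpsl3 F, Esl3 F 0 1⁆ = Esl3 F 0 1 := by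
  rw [Hperp_eq_diagonal, Esl3, diagonal_lie_single]
  convert one_smul F _
  simp [field]
  norm_num

lemma lie_Hperp_E : ⁅Hperpsl3 F, Esl3 F 0 2⁆ = 0 := by
  rw [Hperp_eq_diagonal, Esl3, diagonal_lie_single]
  simp

lemma lie_Hperp_B [NeZero (3 : F)] : ⁅Hperpsl3 F, Esl3 F 1 2⁆ = -Esl3 F 1 2 := by
  rw [Hperp_eq_diagonal, Esl3, diagonal_lie_single, ← neg_one_smul F (single _ _ _)]
  congr 1
  simp [field]
  norm_num

lemma lie_HP_Hperp : ⁅HPsl3 F, Hperpsl3 F⁆ = 0 := by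
  rw [HP_eq_diagonal, Hperp_eq_diagonal]
  exact (commute_diagonal _ _).lie_eq

lemma lie_A_B : ⁅Esl3 F 0 1, Esl3 F 1 2⁆ = Esl3 F 0 2 := by
  rw [Esl3, Esl3, single_lie_single_of_ne (by decide), mul_one, Esl3]

lemma lie_A_E : ⁅Esl3 F 0 1, Esl3 F 0 2⁆ = 0 :=
  single_lie_single_eq_zero (by decide) (by decide) _ _

lemma lie_B_E : ⁅Esl3 F 1 2, Esl3 F 0 2⁆ = 0 :=
  single_lie_single_eq_zero (by decide) (by decide) _ _

lemma lie_E_HP [NeZero (3 : F)] : ⁅Esl3 F 0 2, HPsl3 F⁆ = -Esl3 F 0 2 := by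
  rw [← lie_skew, lie_HP_E]
lemma lie_A_HP [NeZero (3 : F)] : ⁅Esl3 F 0 1, HPsl3 F⁆ = -Esl3 F 0 1 := by
  rw [← lie_skew, lie_HP_A]
lemma lie_B_HP : ⁅Esl3 F 1 2, HPsl3 F⁆ = 0 := by rw [← lie_skew, lie_HP_B, neg_zero]
lemma lie_A_Hperp [NeZero (3 : F)] : ⁅Esl3 F 0 1, Hperpsl3 F⁆ = -Esl3 F 0 1 := by
  rw [← lie_skew, lie_Hperp_A]
lemma lie_E_Hperp : ⁅Esl3 F 0 2, Hperpsl3 F⁆ = 0 := by rw [← lie_skew, lie_Hperp_E, neg_zero]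
lemma lie_B_Hperp [NeZero (3 : F)] : ⁅Esl3 F 1 2, Hperpsl3 F⁆ = Esl3 F 1 2 := by
  rw [← lie_skew, lie_Hperp_B, neg_neg]
lemma lie_Hperp_HP : ⁅Hperpsl3 F, HPsl3 F⁆ = 0 := by rw [← lie_skew, lie_HP_Hperp, neg_zero]
lemma lie_B_A : ⁅Esl3 F 1 2, Esl3 F 0 1⁆ = -Esl3 F 0 2 := by rw [← lie_skew, lie_A_B]
lemma lie_E_A : ⁅Esl3 F 0 2, Esl3 F 0 1⁆ = 0 := by rw [← lie_skew, lie_A_E, neg_zero]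
lemma lie_E_B : ⁅Esl3 F 0 2, Esl3 F 1 2⁆ = 0 := by rw [← lie_skew, lie_B_E, neg_zero]

end sl3

theorem stmt11 (ξ : K) :
    ⁅rJE K ξ (w12 K), rJE K ξ (w13 K)⁆ + ⁅rJE K ξ (w12 K), rJE K ξ (w23 K)⁆ +
      ⁅rJE K ξ (w13 K), rJE K ξ (w23 K)⁆ = 0 := by
  simp only [rJE, add_lie, lie_add, smul_lie_UEA3, lie_smul, lie_w12_w13, lie_w12_w23,
    lie_w13_w23]
  open sl3 in
  simp only [lie_self, lie_HP_E, lie_HP_A, lie_HP_B, lie_HP_Hperp, lie_Hperp_A, lie_Hperp_E,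
    lie_Hperp_B, lie_A_B, lie_A_E, lie_B_E, lie_E_HP, lie_A_HP, lie_B_HP, lie_Hperp_HP, lie_A_Hperp,
    lie_E_Hperp, lie_B_Hperp, lie_B_A, lie_E_A, lie_E_B]
  simp only [tensor3_zero_left, tensor3_zero_mid, tensor3_zero_right, tensor3_neg_left,
    tensor3_neg_mid, tensor3_neg_right]
  module

end
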